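/- Let d ≥ 1 and let S ⊆ ℤ/dℤ be a subset with 2·|S| > d. Then there exists a unit vector g ∈ ℂ^d whose support supp(g) = {n : g_n ≠ 0} equals S and such that ⟨g, M^k T^ℓ g⟩ ≠ 0 for all (k,ℓ) ∈ (ℤ/dℤ)², i.e. rank(G(g)) = d². -/

import Mathlib

open Complex Finset

noncomputable section

/-- `gw d` is the primitive `d`-th root of unity `ω = exp(2πi/d)`. -/
def gw (d : ℕ) : ℂ := Complex.exp (2 * Real.pi * Complex.I / d)

/-- `modT d k l g = M^k T^ℓ g`, where `(Mg)_n = ω^n g_n` and `(Tg)_n = g_{n-1}`. -/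
def modT (d : ℕ) (k l : ZMod d) (g : ZMod d → ℂ) : ZMod d → ℂ :=
  fun n => gw d ^ (k.val * n.val) * g (n - l)

/-- `inn d x y = ⟨x,y⟩ = Σ_n x_n conj(y_n)`. -/
def inn (d : ℕ) [NeZero d] (x y : ZMod d → ℂ) : ℂ :=
  ∑ n : ZMod d, x n * (starRingEnd ℂ) (y n)

/-- The `d² × d²` Gram matrix `G(g)` with entries `|⟨M^k T^ℓ g, M^{k'} T^{ℓ'} g⟩|²`. -/
def Gmat (d : ℕ) [NeZero d] (g : ZMod d → ℂ) :
    Matrix (ZMod d × ZMod d) (ZMod d × ZMod d) ℂ :=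
  fun p q =>
    ((‖inn d (modT d p.1 p.2 g) (modT d q.1 q.2 g)‖ ^ 2 : ℝ) : ℂ)

/-!
The Gram matrix is circulant on `(ℤ/dℤ)²`: `G(g)_{p,q} = |A(q - p)|²`, where
`A(k, ℓ) = ⟨g, M^k T^ℓ g⟩` is the ambiguity function. Its eigenvalues are therefore the Fourier
coefficients of `|A|²`, and a Wiener–Khinchin computation identifies these with `d · |A|²` at a
rotated point, so `G(g)` is invertible as soon as `A` has no zero.

To find such a `g`, take `g_n = t^(3^n) e^(i n)` on `S`. Each `A(k, ℓ)` is then a polynomial in `t`.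
Since `2|S| > d` some `n` has `n, n - ℓ ∈ S`, and because sums of two powers of `3` determine the
powers, the monomial `t^(3^n + 3^(n-ℓ))` collects only `n` and, when `2ℓ = 0`, its partner `n - ℓ`;
the irrationality of `π` keeps the two phases from cancelling. A real `t` avoiding the finitely
many roots works, and normalizing changes neither the support nor the nonvanishing.
-/

open Matrix Polynomial ZMod
open scoped ComplexConjugate

theorem Matrix.rank_circulant_eq_card {α : Type*} [AddCommGroup α] [Fintype α] (v : α → ℂ)
    (hv : ∀ ψ : AddChar α ℂ, ∑ s, v s * ψ s ≠ 0) :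
    (circulant v).rank = Fintype.card α := by
  have eigen : ∀ ψ : AddChar α ℂ, (circulant v)ᵀ *ᵥ ⇑ψ = (∑ s, v s * ψ s) • ⇑ψ := by
    intro ψ
    ext p
    simp only [mulVec, dotProduct, transpose_apply, circulant_apply, Pi.smul_apply, smul_eq_mul,
      Finset.sum_mul]
    refine Fintype.sum_equiv (Equiv.subRight p) _ _ fun q => ?_
    rw [Equiv.subRight_apply, mul_assoc, ← AddChar.map_add_eq_mul, sub_add_cancel]
  have hrange : LinearMap.range (circulant v)ᵀ.mulVecLin = ⊤ := by
    rw [eq_top_iff, ← (AddChar.complexBasis α).span_eq, Submodule.span_le]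
    rintro _ ⟨ψ, rfl⟩
    refine ⟨(∑ s, v s * ψ s)⁻¹ • ⇑ψ, ?_⟩
    rw [mulVecLin_apply, mulVec_smul, eigen, smul_smul, inv_mul_cancel₀ (hv ψ), one_smul,
      AddChar.complexBasis_apply]
  rw [← rank_transpose, rank, hrange, finrank_top, Module.finrank_fintype_fun_eq_card]

theorem padicValNat_pow_add_pow {p : ℕ} [hp : Fact p.Prime] (hp2 : p ≠ 2) (a b : ℕ) :
    padicValNat p (p ^ a + p ^ b) = min a b := by
  wlog hab : a ≤ b generalizing a b
  · rw [add_comm, min_comm]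
    exact this b a (le_of_not_ge hab)
  have hsplit : p ^ a + p ^ b = p ^ a * (1 + p ^ (b - a)) := by
    rw [mul_add, mul_one, ← pow_add, Nat.add_sub_cancel' hab]
  have hndvd : ¬ p ∣ 1 + p ^ (b - a) := by
    rcases Nat.eq_zero_or_pos (b - a) with h | h
    · rw [h, pow_zero, one_add_one_eq_two, Nat.prime_dvd_prime_iff_eq hp.out Nat.prime_two]
      exact hp2
    · rw [Nat.dvd_add_left (dvd_pow_self p h.ne'), Nat.dvd_one]
      exact hp.out.ne_one
  rw [hsplit, padicValNat.mul (pow_pos hp.out.pos a).ne' (by positivity), padicValNat.prime_pow,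
    padicValNat.eq_zero_of_not_dvd hndvd, add_zero, min_eq_left hab]

theorem Nat.pow_add_pow_inj {p : ℕ} [hp : Fact p.Prime] (hp2 : p ≠ 2) {a b c e : ℕ}
    (h : p ^ a + p ^ b = p ^ c + p ^ e) : (a = c ∧ b = e) ∨ (a = e ∧ b = c) := by
  have hmin : min a b = min c e := by
    rw [← padicValNat_pow_add_pow hp2, h, padicValNat_pow_add_pow hp2]
  have hsum : ∀ x y : ℕ, p ^ x + p ^ y = p ^ min x y + p ^ max x y := by
    intro x y
    rcases le_total x y with hxy | hxy <;> simp [hxy, add_comm]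
  have hmax : max a b = max c e := by
    rw [hsum a b, hsum c e, hmin] at h
    exact Nat.pow_right_injective hp.out.two_le (Nat.add_left_cancel h)
  omega

theorem Complex.exp_intCast_mul_I_ne_one {m : ℤ} (hm : m ≠ 0) : exp (m * I) ≠ 1 := by
  rw [Ne, exp_eq_one_iff]
  rintro ⟨n, hn⟩
  have hreal : (m : ℝ) = (2 * n : ℤ) * Real.pi := by
    apply ofReal_injective
    apply mul_right_cancel₀ I_ne_zero
    push_cast
    linear_combination hn
  have hn0 : 2 * n ≠ 0 := by
    rintro h0
    rw [h0, Int.cast_zero, zero_mul, Int.cast_eq_zero] at hreal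
    exact hm hreal
  exact (irrational_pi.intCast_mul hn0).ne_int m hreal.symm

theorem Complex.add_mul_conj_ne_zero {w ε : ℂ} (hw : ‖w‖ = 1) (hε : ε ^ 2 = 1) (hw4 : w ^ 4 ≠ 1) :
    w + ε * conj w ≠ 0 := by
  intro h
  have hnorm : w * conj w = 1 := by rw [mul_conj, normSq_eq_norm_sq, hw]; simp
  have hsq : w ^ 2 = -ε := by linear_combination w * h - ε * hnorm
  exact hw4 (by rw [show w ^ 4 = (w ^ 2) ^ 2 by ring, hsq, neg_sq, hε])

theorem Polynomial.coeff_sum_C_mul_X_pow {ι R : Type*} [Semiring R] (s : Finset ι) (c : ι → R)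
    (e : ι → ℕ) (m : ℕ) :
    (∑ i ∈ s, C (c i) * X ^ e i).coeff m = ∑ i ∈ s with e i = m, c i := by
  rw [finsetSum_coeff, sum_filter]
  simp only [coeff_C_mul_X_pow, eq_comm]

theorem exists_smul_sum_norm_sq_eq_one {ι : Type*} [Fintype ι] {g : ι → ℂ} (hg : g ≠ 0) :
    ∃ c : ℂ, c ≠ 0 ∧ ∑ i, ‖(c • g) i‖ ^ 2 = 1 := by
  set v : EuclideanSpace ℂ ι := WithLp.toLp 2 g
  have hv : v ≠ 0 := by simpa [v] using hg
  refine ⟨(‖v‖ : ℂ)⁻¹, inv_ne_zero (ofReal_ne_zero.mpr (norm_ne_zero_iff.mpr hv)), ?_⟩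
  have hunit : ‖(‖v‖ : ℂ)⁻¹ • v‖ = 1 := norm_smul_inv_norm hv
  have hnorm := EuclideanSpace.norm_sq_eq ((‖v‖ : ℂ)⁻¹ • v)
  rw [hunit, one_pow, WithLp.ofLp_smul, WithLp.ofLp_toLp] at hnorm
  exact hnorm.symm

theorem Finset.exists_mem_sub_mem {G : Type*} [AddGroup G] [Fintype G] [DecidableEq G]
    {S : Finset G} (hS : Fintype.card G < 2 * #S) (l : G) : ∃ n ∈ S, n - l ∈ S := by
  have hcard : #(univ : Finset G) < #S + #(S.map (Equiv.addRight l).toEmbedding) := by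
    rw [card_univ, card_map]; omega
  obtain ⟨n, hn⟩ := inter_nonempty_of_card_lt_card_add_card (subset_univ _) (subset_univ _) hcard
  rw [mem_inter, mem_map_equiv, Equiv.addRight_symm, Equiv.coe_addRight] at hn
  exact ⟨n, hn.1, by simpa only [sub_eq_add_neg] using hn.2⟩

namespace ZMod

variable {d : ℕ} [NeZero d]

theorem exists_eq_stdAddChar_mul (ψ : AddChar (ZMod d) ℂ) :
    ∃ a : ZMod d, ∀ x, ψ x = stdAddChar (a * x) := by
  have hbij : Function.Bijective (stdAddChar (N := d)).mulShift :=
    (Fintype.bijective_iff_injective_and_card _).mpr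
      ⟨AddChar.to_mulShift_inj_of_isPrimitive (isPrimitive_stdAddChar d), by simp⟩
  obtain ⟨a, ha⟩ := hbij.2 ψ
  exact ⟨a, fun x => by rw [← ha, AddChar.mulShift_apply]⟩

theorem stdAddChar_ne_zero (x : ZMod d) : stdAddChar x ≠ 0 :=
  norm_ne_zero_iff.mp (by rw [AddChar.norm_apply]; exact one_ne_zero)

def autocorr (u : ZMod d → ℂ) (l : ZMod d) : ℂ := ∑ n, u n * conj (u (n - l))

theorem conj_dft (u : ZMod d → ℂ) (k : ZMod d) :
    conj (𝓕 u k) = ∑ n, stdAddChar (n * k) * conj (u n) := by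
  simp only [dft_apply, smul_eq_mul, map_sum, map_mul, ← AddChar.map_neg_eq_conj, neg_neg]

theorem dft_autocorr (u : ZMod d → ℂ) : 𝓕 (autocorr u) = fun k => 𝓕 u k * conj (𝓕 u k) := by
  ext k
  rw [conj_dft, dft_apply, dft_apply, Finset.sum_mul_sum]
  simp only [autocorr, Finset.smul_sum]
  rw [Finset.sum_comm]
  refine Finset.sum_congr rfl fun n _ => Fintype.sum_equiv (Equiv.subLeft n) _ _ fun l => ?_
  have : stdAddChar (-(l * k)) = stdAddChar (-(n * k)) * stdAddChar ((n - l) * k) := by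
    rw [← AddChar.map_add_eq_mul]; ring_nf
  rw [Equiv.subLeft_apply, smul_eq_mul, smul_eq_mul, this]
  ring

theorem sum_stdAddChar_mul_eq_dft (Φ : ZMod d → ℂ) (a : ZMod d) :
    ∑ k, stdAddChar (a * k) * Φ k = 𝓕 Φ (-a) := by
  simp only [dft_apply, smul_eq_mul, mul_neg, neg_neg, mul_comm a]

theorem sum_stdAddChar_mul_dft_mul_conj (u : ZMod d → ℂ) (a : ZMod d) :
    ∑ k, stdAddChar (a * k) * (𝓕 u k * conj (𝓕 u k)) = d * autocorr u a := by
  rw [sum_stdAddChar_mul_eq_dft, ← dft_autocorr, dft_dft]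
  simp only [neg_neg, smul_eq_mul]

end ZMod

section TimeFrequency

variable {d : ℕ} [NeZero d]

theorem gw_pow_eq_stdAddChar (m : ℕ) : gw d ^ m = stdAddChar (m : ZMod d) := by
  rw [gw, ← Complex.exp_nat_mul, stdAddChar_apply, toCircle_natCast]
  ring_nf

theorem modT_apply (k l : ZMod d) (g : ZMod d → ℂ) (n : ZMod d) :
    modT d k l g n = stdAddChar (k * n) * g (n - l) := by
  rw [modT, gw_pow_eq_stdAddChar, Nat.cast_mul, natCast_zmod_val, natCast_zmod_val]

def ambiguity (g : ZMod d → ℂ) (k l : ZMod d) : ℂ := inn d g (modT d k l g)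

def lagProduct (g : ZMod d → ℂ) (l : ZMod d) : ZMod d → ℂ := fun n => g n * conj (g (n - l))

theorem ambiguity_eq_dft (g : ZMod d → ℂ) (k l : ZMod d) :
    ambiguity g k l = 𝓕 (lagProduct g l) k := by
  simp only [ambiguity, inn, modT_apply, dft_apply, lagProduct, smul_eq_mul, map_mul,
    ← AddChar.map_neg_eq_conj, mul_comm k]
  exact Finset.sum_congr rfl fun n _ => by ring

theorem inn_modT_modT (g : ZMod d → ℂ) (k l k' l' : ZMod d) :
    inn d (modT d k l g) (modT d k' l' g) =
      stdAddChar ((k - k') * l) * ambiguity g (k' - k) (l' - l) := by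
  simp only [ambiguity, inn, modT_apply, map_mul, ← AddChar.map_neg_eq_conj, Finset.mul_sum]
  refine Fintype.sum_equiv (Equiv.subRight l) _ _ fun n => ?_
  have hchar : stdAddChar (k * n) * stdAddChar (-(k' * n)) =
      stdAddChar ((k - k') * l) * stdAddChar (-((k' - k) * (n - l))) := by
    simp only [← AddChar.map_add_eq_mul]; ring_nf
  rw [Equiv.subRight_apply, sub_sub_sub_cancel_right]
  linear_combination g (n - l) * conj (g (n - l')) * hchar

theorem autocorr_lagProduct_comm (g : ZMod d → ℂ) (a l : ZMod d) :
    autocorr (lagProduct g l) a = autocorr (lagProduct g a) l := by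
  simp only [autocorr, lagProduct, map_mul, conj_conj, sub_right_comm _ a l]
  exact Finset.sum_congr rfl fun n _ => by ring

theorem sum_stdAddChar_mul_ambiguity_mul_conj (g : ZMod d → ℂ) (a b : ZMod d) :
    ∑ k, ∑ l, stdAddChar (a * k) * stdAddChar (b * l) * (ambiguity g k l * conj (ambiguity g k l))
      = d * (ambiguity g (-b) a * conj (ambiguity g (-b) a)) := by
  simp only [ambiguity_eq_dft]
  rw [Finset.sum_comm]
  calc ∑ l, ∑ k, stdAddChar (a * k) * stdAddChar (b * l) *
        (𝓕 (lagProduct g l) k * conj (𝓕 (lagProduct g l) k))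
      = ∑ l, stdAddChar (b * l) * (d * autocorr (lagProduct g a) l) := by
        refine Finset.sum_congr rfl fun l _ => ?_
        rw [← autocorr_lagProduct_comm, ← sum_stdAddChar_mul_dft_mul_conj, Finset.mul_sum]
        exact Finset.sum_congr rfl fun k _ => by ring
    _ = d * (𝓕 (lagProduct g a) (-b) * conj (𝓕 (lagProduct g a) (-b))) := by
        simp only [mul_left_comm _ (d : ℂ), ← Finset.mul_sum, sum_stdAddChar_mul_eq_dft,
          dft_autocorr]

theorem Gmat_eq_transpose_circulant (g : ZMod d → ℂ) :
    Gmat d g = (circulant fun s : ZMod d × ZMod d => ((‖ambiguity g s.1 s.2‖ ^ 2 : ℝ) : ℂ))ᵀ := by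
  ext p q
  rw [Gmat, transpose_apply, circulant_apply, inn_modT_modT, norm_mul, AddChar.norm_apply, one_mul]
  rfl

theorem rank_Gmat_of_ambiguity_ne_zero (g : ZMod d → ℂ) (hA : ∀ k l, ambiguity g k l ≠ 0) :
    (Gmat d g).rank = d ^ 2 := by
  rw [Gmat_eq_transpose_circulant, rank_transpose, rank_circulant_eq_card, Fintype.card_prod,
    ZMod.card, sq]
  intro ψ
  obtain ⟨a, ha⟩ := exists_eq_stdAddChar_mul (ψ.compAddMonoidHom (AddMonoidHom.inl _ _))
  obtain ⟨b, hb⟩ := exists_eq_stdAddChar_mul (ψ.compAddMonoidHom (AddMonoidHom.inr _ _))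
  have hψ : ∀ k l : ZMod d, ψ (k, l) = stdAddChar (a * k) * stdAddChar (b * l) := by
    intro k l
    rw [← ha, ← hb, AddChar.compAddMonoidHom_apply, AddChar.compAddMonoidHom_apply,
      ← AddChar.map_add_eq_mul]
    simp
  simp only [Fintype.sum_prod_type, hψ, ofReal_pow, ← mul_conj', mul_comm (_ * conj _)]
  rw [sum_stdAddChar_mul_ambiguity_mul_conj]
  exact mul_ne_zero (Nat.cast_ne_zero.mpr (NeZero.ne d))
    (mul_ne_zero (hA _ _) ((_root_.map_ne_zero _).mpr (hA _ _)))

theorem ambiguity_smul {d : ℕ} [NeZero d] (c : ℂ) (g : ZMod d → ℂ) (k l : ZMod d) :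
    ambiguity (c • g) k l = c * conj c * ambiguity g k l := by
  simp only [ambiguity, inn, modT, Pi.smul_apply, smul_eq_mul, map_mul, Finset.mul_sum]
  exact Finset.sum_congr rfl fun n _ => by ring

end TimeFrequency

section Construction

variable {d : ℕ}

-- Real `g` cannot work: for even `d`, `A(k, d/2)` vanishes for every odd `k`.
def phase (n : ZMod d) : ℂ := exp (n.val * I)

theorem phase_mul_conj_phase (n m : ZMod d) :
    phase n * conj (phase m) = exp (((n.val - m.val : ℤ) : ℂ) * I) := by
  rw [phase, phase, ← exp_conj, ← exp_add]
  congr 1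
  simp only [map_mul, conj_I, map_natCast]
  push_cast
  ring

theorem norm_phase_mul_conj_phase (n m : ZMod d) : ‖phase n * conj (phase m)‖ = 1 := by
  rw [phase_mul_conj_phase, ← ofReal_intCast, norm_exp_ofReal_mul_I]

def lacunaryVector (S : Finset (ZMod d)) (t : ℝ) (n : ZMod d) : ℂ :=
  if n ∈ S then (t : ℂ) ^ 3 ^ n.val * phase n else 0

theorem lacunaryVector_ne_zero_iff {S : Finset (ZMod d)} {t : ℝ} (ht : t ≠ 0) (n : ZMod d) :
    lacunaryVector S t n ≠ 0 ↔ n ∈ S := by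
  by_cases hn : n ∈ S
  · simp [lacunaryVector, hn, phase, ht]
  · simp [lacunaryVector, hn]

variable [NeZero d]

theorem phase_mul_conj_phase_pow_four_ne_one {n m : ZMod d} (h : n ≠ m) :
    (phase n * conj (phase m)) ^ 4 ≠ 1 := by
  rw [phase_mul_conj_phase, ← exp_nat_mul]
  have hval : (n.val : ℤ) - m.val ≠ 0 :=
    sub_ne_zero.mpr (by exact_mod_cast (ZMod.val_injective d).ne h)
  convert exp_intCast_mul_I_ne_one (mul_ne_zero (by norm_num : (4 : ℤ) ≠ 0) hval) using 2
  push_cast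
  ring

def lagExponent (l n : ZMod d) : ℕ := 3 ^ n.val + 3 ^ (n - l).val

theorem lagExponent_eq_lagExponent_iff {l n m : ZMod d} :
    lagExponent l n = lagExponent l m ↔ n = m ∨ (n = m - l ∧ n - l = m) := by
  constructor
  · intro h
    rcases Nat.pow_add_pow_inj (by norm_num) h with ⟨h1, -⟩ | ⟨h1, h2⟩
    · exact Or.inl (ZMod.val_injective d h1)
    · exact Or.inr ⟨ZMod.val_injective d h1, ZMod.val_injective d h2⟩
  · rintro (rfl | ⟨rfl, h⟩)
    · rfl
    · rw [lagExponent, lagExponent, h, add_comm]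

def lagCoeff (k l n : ZMod d) : ℂ := stdAddChar (-(n * k)) * (phase n * conj (phase (n - l)))

def ambiguityPoly (S : Finset (ZMod d)) (k l : ZMod d) : ℂ[X] :=
  ∑ n with n ∈ S ∧ n - l ∈ S, C (lagCoeff k l n) * X ^ lagExponent l n

theorem ambiguity_lacunaryVector (S : Finset (ZMod d)) (t : ℝ) (k l : ZMod d) :
    ambiguity (lacunaryVector S t) k l = (ambiguityPoly S k l).eval (t : ℂ) := by
  rw [ambiguity_eq_dft, dft_apply, ambiguityPoly, eval_finsetSum, sum_filter]
  refine sum_congr rfl fun n _ => ?_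
  by_cases h : n ∈ S ∧ n - l ∈ S
  · simp [lagProduct, lacunaryVector, lagCoeff, lagExponent, h.1, h.2, pow_add]
    ring
  · rw [if_neg h]
    rcases not_and_or.mp h with hn | hn <;> simp [lagProduct, lacunaryVector, hn]

theorem lagCoeff_ne_zero (k l n : ZMod d) : lagCoeff k l n ≠ 0 := by
  rw [lagCoeff, phase_mul_conj_phase]
  exact mul_ne_zero (stdAddChar_ne_zero _) (exp_ne_zero _)

theorem lagCoeff_add_lagCoeff_sub_ne_zero {k l n : ZMod d} (hl : n - l - l = n) (hne : n - l ≠ n) :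
    lagCoeff k l n + lagCoeff k l (n - l) ≠ 0 := by
  set w := phase n * conj (phase (n - l))
  have hsum : lagCoeff k l n + lagCoeff k l (n - l) =
      stdAddChar (-(n * k)) * (w + stdAddChar (l * k) * conj w) := by
    have hchar : stdAddChar (-((n - l) * k)) = stdAddChar (-(n * k)) * stdAddChar (l * k) := by
      rw [← AddChar.map_add_eq_mul]; ring_nf
    rw [lagCoeff, lagCoeff, hl, hchar]
    simp only [w, map_mul (starRingEnd ℂ), conj_conj]
    ring
  have hε : stdAddChar (l * k) ^ 2 = 1 := by
    rw [← AddChar.map_nsmul_eq_pow, two_nsmul, ← add_mul,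
      show l + l = 0 by linear_combination -hl, zero_mul, AddChar.map_zero_eq_one]
  rw [hsum]
  exact mul_ne_zero (stdAddChar_ne_zero _) (add_mul_conj_ne_zero (norm_phase_mul_conj_phase _ _)
    hε (phase_mul_conj_phase_pow_four_ne_one hne.symm))

theorem filter_lagExponent_eq_lagExponent {S : Finset (ZMod d)} {l n₀ : ZMod d} (h₀ : n₀ ∈ S)
    (h₀l : n₀ - l ∈ S) :
    ({n | (n ∈ S ∧ n - l ∈ S) ∧ lagExponent l n = lagExponent l n₀} : Finset (ZMod d)) =
      if n₀ - l - l = n₀ ∧ n₀ - l ≠ n₀ then {n₀, n₀ - l} else {n₀} := by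
  ext n
  simp only [mem_filter, mem_univ, true_and, lagExponent_eq_lagExponent_iff]
  split_ifs with hpair
  · simp only [mem_insert, mem_singleton]
    constructor
    · rintro ⟨-, rfl | ⟨rfl, -⟩⟩ <;> simp
    · rintro (rfl | rfl)
      · exact ⟨⟨h₀, h₀l⟩, Or.inl rfl⟩
      · exact ⟨⟨h₀l, by rwa [hpair.1]⟩, Or.inr ⟨rfl, hpair.1⟩⟩
  · rw [mem_singleton]
    constructor
    · rintro ⟨-, rfl | ⟨rfl, h⟩⟩
      · rfl
      · exact not_not.mp fun hne => hpair ⟨h, hne⟩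
    · rintro rfl
      exact ⟨⟨h₀, h₀l⟩, Or.inl rfl⟩

theorem ambiguityPoly_ne_zero {S : Finset (ZMod d)} (hS : d < 2 * #S) (k l : ZMod d) :
    ambiguityPoly S k l ≠ 0 := by
  obtain ⟨n₀, h₀, h₀l⟩ := exists_mem_sub_mem (by rwa [ZMod.card]) l
  intro hP
  have hcoeff := congrArg (coeff · (lagExponent l n₀)) hP
  simp only [ambiguityPoly, coeff_sum_C_mul_X_pow, coeff_zero, filter_filter,
    filter_lagExponent_eq_lagExponent h₀ h₀l] at hcoeff
  split_ifs at hcoeff with hpair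
  · rw [sum_pair hpair.2.symm] at hcoeff
    exact lagCoeff_add_lagCoeff_sub_ne_zero hpair.1 hpair.2 hcoeff
  · rw [sum_singleton] at hcoeff
    exact lagCoeff_ne_zero k l n₀ hcoeff

theorem exists_ambiguity_ne_zero {S : Finset (ZMod d)} (hS : d < 2 * #S) :
    ∃ g : ZMod d → ℂ, (∀ n, g n ≠ 0 ↔ n ∈ S) ∧ ∀ k l, ambiguity g k l ≠ 0 := by
  set Q : ℂ[X] := X * ∏ kl : ZMod d × ZMod d, ambiguityPoly S kl.1 kl.2
  have hQ : Q ≠ 0 :=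
    mul_ne_zero X_ne_zero (prod_ne_zero_iff.mpr fun kl _ => ambiguityPoly_ne_zero hS _ _)
  obtain ⟨t, ht⟩ := ((finite_setOfPred_isRoot hQ).preimage ofReal_injective.injOn).exists_notMem
  simp only [Set.mem_preimage, Set.mem_ofPred_eq, IsRoot, Q, eval_mul, eval_X, eval_prod,
    mul_eq_zero, prod_eq_zero_iff, mem_univ, true_and, ofReal_eq_zero, not_or, not_exists,
    Prod.forall] at ht
  exact ⟨lacunaryVector S t, lacunaryVector_ne_zero_iff ht.1, fun k l => by
    rw [ambiguity_lacunaryVector]; exact ht.2 k l⟩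

end Construction

theorem stmt4_general (d : ℕ) [NeZero d] (S : Finset (ZMod d))
    (hS : d < 2 * S.card) :
    ∃ g : ZMod d → ℂ,
      (∑ n : ZMod d, ‖g n‖ ^ 2 = 1) ∧
      (∀ n : ZMod d, g n ≠ 0 ↔ n ∈ S) ∧
      (∀ k l : ZMod d, inn d g (modT d k l g) ≠ 0) ∧
      (Gmat d g).rank = d ^ 2 := by
  obtain ⟨g, hsupp, hA⟩ := exists_ambiguity_ne_zero hS
  obtain ⟨n₀, hn₀⟩ := card_pos.mp (by omega : 0 < #S)
  obtain ⟨c, hc, hnorm⟩ :=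
    exists_smul_sum_norm_sq_eq_one fun h0 => (hsupp n₀).mpr hn₀ (congrFun h0 n₀)
  have hA' : ∀ k l, ambiguity (c • g) k l ≠ 0 := fun k l => by
    rw [ambiguity_smul]
    exact mul_ne_zero (mul_ne_zero hc ((_root_.map_ne_zero _).mpr hc)) (hA k l)
  refine ⟨c • g, hnorm, fun n => ?_, hA', rank_Gmat_of_ambiguity_ne_zero _ hA'⟩
  rw [Pi.smul_apply, smul_eq_mul, mul_ne_zero_iff, hsupp]
  exact and_iff_right hc

/-- for any subset `S ⊆ ℤ/dℤ` with `2|S| > d` there is a unit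
vector `g` supported exactly on `S` with `⟨g, M^k T^ℓ g⟩ ≠ 0` for all `(k,ℓ)`,
i.e. `rank G(g) = d²`. -/
theorem stmt4 (d : ℕ) [NeZero d] (hd : 1 ≤ d) (S : Finset (ZMod d))
    (hS : d < 2 * S.card) :
    ∃ g : ZMod d → ℂ,
      (∑ n : ZMod d, ‖g n‖ ^ 2 = 1) ∧
      (∀ n : ZMod d, g n ≠ 0 ↔ n ∈ S) ∧
      (∀ k l : ZMod d, inn d g (modT d k l g) ≠ 0) ∧
      (Gmat d g).rank = d ^ 2 :=
  stmt4_general d S hS
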